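/- Let ε ∈ [0,1], λ > 0, and define the smoothed ε-greedy policy f^{(ε,λ,Q)}(a) := ε/|A| + (1−ε)·σ(Q/λ)(a) on a finite action set A. Let Q* have unique maximizer a* with gap g > 0, and let f^{(0,0,Q*)} be the Dirac distribution at a*. Then max_a |f^{(ε,λ,Q)}(a) − f^{(0,0,Q*)}(a)| ≤ ε + ‖Q − Q*‖_∞/λ + |A|·exp(−g/λ). -/

import Mathlib

open Finset

/-- Boltzmann (softmax) distribution with temperature `lam`. -/
noncomputable def softmax {A : Type*} [Fintype A] (q : A → ℝ) (lam : ℝ) (a : A) : ℝ :=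
  Real.exp (q a / lam) / ∑ b, Real.exp (q b / lam)

/-- Smoothed ε-greedy policy: mixture of the uniform policy and the softmax policy. -/
noncomputable def segPolicy {A : Type*} [Fintype A] (ε lam : ℝ) (Q : A → ℝ) (a : A) : ℝ :=
  ε / (Fintype.card A : ℝ) + (1 - ε) * softmax Q lam a

/-!
The softmax factor is compared with `σ(Q*/λ)` through a Lipschitz bound and `σ(Q*/λ)` with the
Dirac mass through the gap; the uniform part contributes at most `ε`.

Lipschitz bound: writing `σ(p)(a) = u / (u + v)` with `u = exp p_a` and `v = ∑_{b ≠ a} exp p_b`,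
a perturbation of size `s` multiplies `u` and `v` by factors in `[e^{-s}, e^s]`, so
`σ(p)(a) - σ(q)(a) ≤ k²u/(k²u + v) - u/(u + v)` with `k = e^s`. By AM-GM this is at most
`(k - 1)/(k + 1) = tanh (s/2)`, and `k (1 - s) ≤ 1` turns this into `≤ s`.

Gap: for `b ≠ a*`, `σ(Q*/λ)(b) ≤ exp (Q*_b/λ) / exp (Q*_{a*}/λ) ≤ exp (-g/λ)`.
-/

open Real

lemma div_add_sub_div_add_le {u v u' v' s : ℝ} (hu : 0 < u) (hv : 0 ≤ v) (hu' : 0 < u')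
    (hv' : 0 ≤ v') (hs : 0 ≤ s) (hu'u : u' ≤ exp s * u) (hvv' : v ≤ exp s * v') :
    u' / (u' + v') - u / (u + v) ≤ s := by
  set k := exp s with hk_def
  have hk_tanh : k - 1 ≤ s * (k + 1) := by
    have : k * (1 - s) ≤ 1 := by
      calc k * (1 - s) ≤ k * exp (-s) := by gcongr; exact one_sub_le_exp_neg s
        _ = 1 := by rw [hk_def, ← exp_add, add_neg_cancel, exp_zero]
    nlinarith
  have htilt : u' / (u' + v') ≤ k ^ 2 * u / (k ^ 2 * u + v) := by
    rw [div_le_div_iff₀ (by positivity) (by positivity)]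
    nlinarith [mul_le_mul_of_nonneg_right hu'u hv,
      mul_le_mul_of_nonneg_left hvv' (by positivity : 0 ≤ k * u)]
  have hamgm : k ^ 2 * u / (k ^ 2 * u + v) - u / (u + v) ≤ s := by
    rw [div_sub_div _ _ (by positivity) (by positivity), div_le_iff₀ (by positivity)]
    have huv : 0 ≤ u * v := by positivity
    nlinarith [mul_le_mul_of_nonneg_left hk_tanh (by positivity : 0 ≤ (k + 1) * (u * v)),
      mul_nonneg hs (sq_nonneg (k * u - v))]
  linarith

section Softmax

variable {A : Type*} [Fintype A]

lemma softmax_nonneg (q : A → ℝ) (lam : ℝ) (a : A) : 0 ≤ softmax q lam a := by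
  unfold softmax; positivity

lemma sum_softmax [Nonempty A] (q : A → ℝ) (lam : ℝ) : ∑ a, softmax q lam a = 1 := by
  have : 0 < ∑ b, exp (q b / lam) := sum_pos (fun b _ => exp_pos _) univ_nonempty
  simp only [softmax, ← sum_div, div_self this.ne']

lemma softmax_eq_div_add_sum_erase [DecidableEq A] (q : A → ℝ) (lam : ℝ) (a : A) :
    softmax q lam a =
      exp (q a / lam) / (exp (q a / lam) + ∑ b ∈ univ.erase a, exp (q b / lam)) := by
  rw [softmax, add_sum_erase _ (fun b => exp (q b / lam)) (mem_univ a)]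

lemma exp_div_le_exp_mul_exp_div {x y s lam : ℝ} (hlam : 0 < lam) (h : x - y ≤ s) :
    exp (x / lam) ≤ exp (s / lam) * exp (y / lam) := by
  rw [← exp_add, exp_le_exp, ← add_div]
  gcongr
  linarith

lemma softmax_sub_softmax_le {p q : A → ℝ} {s lam : ℝ} (hlam : 0 < lam)
    (h : ∀ b, |p b - q b| ≤ s) (a : A) : softmax p lam a - softmax q lam a ≤ s / lam := by
  classical
  have hs : 0 ≤ s / lam := div_nonneg ((abs_nonneg _).trans (h a)) hlam.le
  have hpq : ∀ b, exp (p b / lam) ≤ exp (s / lam) * exp (q b / lam) := fun b =>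
    exp_div_le_exp_mul_exp_div hlam (abs_le.mp (h b)).2
  have hqp : ∀ b, exp (q b / lam) ≤ exp (s / lam) * exp (p b / lam) := fun b =>
    exp_div_le_exp_mul_exp_div hlam (by linarith [(abs_le.mp (h b)).1])
  rw [softmax_eq_div_add_sum_erase, softmax_eq_div_add_sum_erase]
  refine div_add_sub_div_add_le (exp_pos _) (by positivity) (exp_pos _) (by positivity) hs
    (hpq a) ?_
  rw [mul_sum]
  exact sum_le_sum fun b _ => hqp b

lemma abs_softmax_sub_softmax_le {p q : A → ℝ} {s lam : ℝ} (hlam : 0 < lam)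
    (h : ∀ b, |p b - q b| ≤ s) (a : A) : |softmax p lam a - softmax q lam a| ≤ s / lam :=
  abs_sub_le_iff.mpr ⟨softmax_sub_softmax_le hlam h a,
    softmax_sub_softmax_le hlam (fun b => abs_sub_comm (q b) (p b) ▸ h b) a⟩

lemma softmax_le_exp_neg_gap {q : A → ℝ} {astar b : A} {g lam : ℝ} (hlam : 0 < lam)
    (hgap : q b ≤ q astar - g) : softmax q lam b ≤ exp (-g / lam) :=
  calc softmax q lam b ≤ exp (q b / lam) / exp (q astar / lam) := by
        unfold softmax
        gcongr
        exact single_le_sum (f := fun b => exp (q b / lam)) (fun _ _ => (exp_pos _).le)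
          (mem_univ astar)
    _ ≤ exp (-g / lam) := by
        rw [← exp_sub, exp_le_exp, ← sub_div]
        gcongr
        linarith

lemma abs_softmax_sub_ite_le [DecidableEq A] [Nonempty A] {q : A → ℝ} {astar : A} {g lam : ℝ}
    (hlam : 0 < lam) (hgap : ∀ a, a ≠ astar → q a ≤ q astar - g) (a : A) :
    |softmax q lam a - (if a = astar then 1 else 0)| ≤ Fintype.card A * exp (-g / lam) := by
  have hcard : (1 : ℝ) ≤ Fintype.card A := by exact_mod_cast Fintype.card_pos
  have hexp : 0 ≤ exp (-g / lam) := (exp_pos _).le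
  split_ifs with ha
  · subst ha
    have hrest : ∑ b ∈ univ.erase a, softmax q lam b ≤ Fintype.card A * exp (-g / lam) :=
      calc ∑ b ∈ univ.erase a, softmax q lam b ≤ ∑ _b ∈ univ.erase a, exp (-g / lam) :=
            sum_le_sum fun b hb => softmax_le_exp_neg_gap hlam (hgap b (ne_of_mem_erase hb))
        _ ≤ ∑ _b : A, exp (-g / lam) :=
            sum_le_sum_of_subset_of_nonneg (erase_subset _ _) fun _ _ _ => hexp
        _ = Fintype.card A * exp (-g / lam) := by simp
    have hsplit := add_sum_erase univ (softmax q lam) (mem_univ a)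
    rw [sum_softmax] at hsplit
    have hrest_nonneg : 0 ≤ ∑ b ∈ univ.erase a, softmax q lam b :=
      sum_nonneg fun b _ => softmax_nonneg q lam b
    rw [abs_sub_comm, abs_of_nonneg (by linarith)]
    linarith
  · rw [sub_zero, abs_of_nonneg (softmax_nonneg q lam a)]
    nlinarith [softmax_le_exp_neg_gap (lam := lam) hlam (hgap a ha)]

end Softmax

lemma abs_mix_sub_le {ε x y d r : ℝ} (hε : ε ∈ Set.Icc (0 : ℝ) 1) (hx : |x - d| ≤ 1)
    (hy : |y - d| ≤ r) : |ε * x + (1 - ε) * y - d| ≤ ε + r := by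
  obtain ⟨hε0, hε1⟩ := hε
  have hr : 0 ≤ r := (abs_nonneg _).trans hy
  calc |ε * x + (1 - ε) * y - d| = |ε * (x - d) + (1 - ε) * (y - d)| := by ring_nf
    _ ≤ ε * |x - d| + (1 - ε) * |y - d| := by
        refine (abs_add_le _ _).trans_eq ?_
        rw [abs_mul, abs_mul, abs_of_nonneg hε0, abs_of_nonneg (sub_nonneg.mpr hε1)]
    _ ≤ ε + r := by nlinarith

theorem seg_vs_greedy_general {A : Type*} [Fintype A] [DecidableEq A] [Nonempty A]
    (ε lam : ℝ) (hε : ε ∈ Set.Icc (0 : ℝ) 1) (hlam : 0 < lam)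
    (Qstar : A → ℝ) (astar : A) (g : ℝ)
    (hgap : ∀ a, a ≠ astar → Qstar a ≤ Qstar astar - g)
    (Q : A → ℝ) :
    ∀ a, |segPolicy ε lam Q a - (if a = astar then (1 : ℝ) else 0)| ≤
      ε + (univ.sup' univ_nonempty fun x => |Q x - Qstar x|) / lam +
        (Fintype.card A : ℝ) * Real.exp (-g / lam) := by
  intro a
  have hdist : ∀ b, |Q b - Qstar b| ≤ univ.sup' univ_nonempty fun x => |Q x - Qstar x| :=
    fun b => le_sup' (fun x => |Q x - Qstar x|) (mem_univ b)
  have huniform : |(Fintype.card A : ℝ)⁻¹ - (if a = astar then 1 else 0)| ≤ 1 :=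
    abs_sub_le_of_nonneg_of_le (by positivity)
      (inv_le_one_of_one_le₀ (by exact_mod_cast Fintype.card_pos)) (by split_ifs <;> norm_num)
      (by split_ifs <;> norm_num)
  have hsoftmax := (abs_sub_le _ (softmax Qstar lam a) _).trans
    (add_le_add (abs_softmax_sub_softmax_le hlam hdist a) (abs_softmax_sub_ite_le hlam hgap a))
  have hmix := abs_mix_sub_le hε huniform hsoftmax
  rw [← add_assoc] at hmix
  convert hmix using 2
  rw [segPolicy, div_eq_mul_inv]

theorem seg_vs_greedy {A : Type*} [Fintype A] [DecidableEq A] [Nonempty A]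
    (ε lam : ℝ) (hε : ε ∈ Set.Icc (0 : ℝ) 1) (hlam : 0 < lam)
    (Qstar : A → ℝ) (astar : A) (g : ℝ) (hg : 0 < g)
    (hgap : ∀ a, a ≠ astar → Qstar a ≤ Qstar astar - g)
    (Q : A → ℝ) :
    ∀ a, |segPolicy ε lam Q a - (if a = astar then (1 : ℝ) else 0)| ≤
      ε + (univ.sup' univ_nonempty fun x => |Q x - Qstar x|) / lam +
        (Fintype.card A : ℝ) * Real.exp (-g / lam) :=
  seg_vs_greedy_general ε lam hε hlam Qstar astar g hgap Q
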